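/- With the hypotheses above, Σ_{i=1}^N y_i σ^β(x)_i ≤ y_1 + Σ_{i=2}^N (y_i − y_1)·exp(−β(x_1 − x_i)) + Σ_{i=2}^N |y_i − y_1|·exp(−β(x_1 − x_i))·(Σ_{j=2}^N exp(−β(x_1 − x_j))). -/

import Mathlib

/-!
Dividing numerator and denominator of the softmax by `exp (β x₀)` turns the weights into
`eᵢ = exp (-β (x₀ - xᵢ))` with `e₀ = 1`. Writing `E = ∑_{i ≠ 0} eᵢ` and
`A = ∑_{i ≠ 0} (yᵢ - y₀) eᵢ`, the softmax average is exactly `y₀ + A / (1 + E)`, and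
`A / (1 + E) = A - A E / (1 + E) ≤ A + |A| E` since `E ≥ 0`.
-/

open Finset

lemma div_one_add_le_add_mul {A B E : ℝ} (hE : 0 ≤ E) (hAB : |A| ≤ B) :
    A / (1 + E) ≤ A + B * E := by
  have hB : 0 ≤ A + B := by linarith [neg_abs_le A]
  rw [div_le_iff₀ (by linarith)]
  nlinarith [mul_nonneg hE hB, mul_nonneg (mul_nonneg ((abs_nonneg A).trans hAB) hE) hE]

section WeightedAverage

variable {ι : Type*} [Fintype ι] [DecidableEq ι]

lemma sum_mul_eq_mul_sum_add_sum_erase (i₀ : ι) (y e : ι → ℝ) :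
    ∑ i, y i * e i = y i₀ * ∑ i, e i + ∑ i ∈ univ.erase i₀, (y i - y i₀) * e i := by
  rw [sum_erase _ (by simp), mul_sum, ← sum_add_distrib]
  exact sum_congr rfl fun i _ => by ring

lemma sum_mul_div_sum_le (i₀ : ι) (y e : ι → ℝ) (he₀ : e i₀ = 1) (he : ∀ i, 0 ≤ e i) :
    ∑ i, y i * (e i / ∑ j, e j)
      ≤ y i₀ + ∑ i ∈ univ.erase i₀, (y i - y i₀) * e i
        + ∑ i ∈ univ.erase i₀, |y i - y i₀| * e i * ∑ j ∈ univ.erase i₀, e j := by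
  set E := ∑ j ∈ univ.erase i₀, e j
  set A := ∑ i ∈ univ.erase i₀, (y i - y i₀) * e i
  have hE : 0 ≤ E := sum_nonneg fun i _ => he i
  have hsum : ∑ j, e j = 1 + E := by rw [← add_sum_erase _ _ (mem_univ i₀), he₀]
  have hAB : |A| ≤ ∑ i ∈ univ.erase i₀, |y i - y i₀| * e i :=
    (abs_sum_le_sum_abs _ _).trans_eq <|
      sum_congr rfl fun i _ => by rw [abs_mul, abs_of_nonneg (he i)]
  have havg : ∑ i, y i * (e i / ∑ j, e j) = y i₀ + A / (1 + E) := by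
    simp_rw [← mul_div_assoc, ← sum_div, sum_mul_eq_mul_sum_add_sum_erase i₀, hsum,
      add_div, mul_div_cancel_right₀ _ (by linarith : 1 + E ≠ 0)]
    rfl
  rw [havg, ← sum_mul, add_assoc]
  exact add_le_add le_rfl (div_one_add_le_add_mul hE hAB)

end WeightedAverage

lemma exp_mul_div_sum_exp_mul {ι : Type*} [Fintype ι] (β : ℝ) (x : ι → ℝ) (i₀ i : ι) :
    Real.exp (β * x i) / ∑ j, Real.exp (β * x j)
      = Real.exp (-β * (x i₀ - x i)) / ∑ j, Real.exp (-β * (x i₀ - x j)) := by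
  have hshift : ∀ j, Real.exp (-β * (x i₀ - x j)) = Real.exp (β * x j) * Real.exp (-(β * x i₀)) :=
    fun j => by rw [← Real.exp_add]; ring_nf
  simp_rw [hshift, ← sum_mul, mul_div_mul_right _ _ (Real.exp_ne_zero _)]

/-- **Softmax-weighted average upper bound.** If `x 0 > x 1 > ... > x (N-1)`, `y i ≥ 0`,
and `β > 0`, then
`∑ i, y i · σ^β(x)_i ≤ y 0 + ∑_{i ≠ 0} (y i − y 0)·exp(−β(x 0 − x i))
  + ∑_{i ≠ 0} |y i − y 0|·exp(−β(x 0 − x i))·(∑_{j ≠ 0} exp(−β(x 0 − x j)))`. -/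
theorem softmax_average_upper_bound (N : ℕ) (hN : 2 ≤ N) (x y : Fin N → ℝ) (β : ℝ) :
    (∑ i, y i * (Real.exp (β * x i) / (∑ j, Real.exp (β * x j))))
      ≤ y ⟨0, by omega⟩
        + (∑ i ∈ Finset.univ.erase (⟨0, by omega⟩ : Fin N),
            (y i - y ⟨0, by omega⟩) * Real.exp (-β * (x ⟨0, by omega⟩ - x i)))
        + (∑ i ∈ Finset.univ.erase (⟨0, by omega⟩ : Fin N),
            |y i - y ⟨0, by omega⟩| * Real.exp (-β * (x ⟨0, by omega⟩ - x i)) *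
              (∑ j ∈ Finset.univ.erase (⟨0, by omega⟩ : Fin N),
                Real.exp (-β * (x ⟨0, by omega⟩ - x j)))) := by
  simp_rw [exp_mul_div_sum_exp_mul β x ⟨0, by omega⟩]
  exact sum_mul_div_sum_le _ y _ (by simp) fun _ => (Real.exp_pos _).le
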